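/- Let G be a cubic graph, let u1,...,u5 be the vertices of a circuit of G in order, and assume G is either cyclically 5-connected, or quad-connected with a quadrangle C such that u3,u4 ∈ V(C) and u1,u2,u5 ∉ V(C). Let v1 be the neighbor of u1 other than u2 and u5. Then G+(u3,u4,u1,v1) is a long 1-extension of G. -/

import Mathlib

open SimpleGraph

/-- A graph has a circuit if it contains a cycle. -/
def HasCircuit {V : Type} (G : SimpleGraph V) : Prop :=
  ∃ (v : V) (w : G.Walk v v), w.IsCycle

/-- `s` is the vertex set of a quadrangle (circuit of length four) of `G`. -/
def IsQuadSet {V : Type} (G : SimpleGraph V) (s : Set V) : Prop :=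
  ∃ a b c d : V, s = {a, b, c, d} ∧ a ≠ b ∧ a ≠ c ∧ a ≠ d ∧ b ≠ c ∧ b ≠ d ∧ c ≠ d ∧
    G.Adj a b ∧ G.Adj b c ∧ G.Adj c d ∧ G.Adj d a

def HasQuadrangle {V : Type} (G : SimpleGraph V) : Prop := ∃ s, IsQuadSet G s

def AtMostOneQuadrangle {V : Type} (G : SimpleGraph V) : Prop :=
  ∀ s t, IsQuadSet G s → IsQuadSet G t → s = t

/-- The edge cut `δA`: edges with one end in `A` and the other outside. -/
def cutEdges {V : Type} (G : SimpleGraph V) (A : Set V) : Set (Sym2 V) :=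
  {e | ∃ a b, a ∈ A ∧ b ∉ A ∧ G.Adj a b ∧ e = s(a, b)}

/-- `G` is `k`-connected: more than `k` vertices and removing fewer than `k`
vertices leaves a connected graph. -/
def IsKConnected {V : Type} [Fintype V] (G : SimpleGraph V) (k : ℕ) : Prop :=
  k < Fintype.card V ∧ ∀ S : Set V, S.ncard < k → (G.induce Sᶜ).Connected

/-- Every vertex has degree three. -/
def IsCubic {V : Type} (G : SimpleGraph V) : Prop :=
  ∀ v : V, (G.neighborSet v).ncard = 3

/-- Cyclically `k`-connected cubic graph: 3-connected, at least `2k` vertices, and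
every edge-cut of cardinality less than `k` has a circuit-free side. -/
def CyclicallyKConnected {V : Type} [Fintype V] (G : SimpleGraph V) (k : ℕ) : Prop :=
  IsKConnected G 3 ∧ 2 * k ≤ Fintype.card V ∧
    ∀ A : Set V, A.Nonempty → Aᶜ.Nonempty → (cutEdges G A).ncard < k →
      ¬ HasCircuit (G.induce A) ∨ ¬ HasCircuit (G.induce Aᶜ)

/-- The induced subgraph on `A` is (exactly) a quadrangle. -/
def IsQuadrangleGraphOn {V : Type} (G : SimpleGraph V) (A : Set V) : Prop :=
  ∃ a b c d : V, A = {a, b, c, d} ∧ a ≠ b ∧ a ≠ c ∧ a ≠ d ∧ b ≠ c ∧ b ≠ d ∧ c ≠ d ∧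
    G.Adj a b ∧ G.Adj b c ∧ G.Adj c d ∧ G.Adj d a ∧ ¬ G.Adj a c ∧ ¬ G.Adj b d

/-- Quad-connected cubic graph. -/
def QuadConnected {V : Type} [Fintype V] (G : SimpleGraph V) : Prop :=
  CyclicallyKConnected G 4 ∧ 10 ≤ Fintype.card V ∧
    ((∃ s t, IsQuadSet G s ∧ IsQuadSet G t ∧ s ≠ t) → 12 ≤ Fintype.card V) ∧
    ∀ A : Set V, A.Nonempty → Aᶜ.Nonempty → (cutEdges G A).ncard ≤ 4 →
      (¬ HasCircuit (G.induce A) ∨ IsQuadrangleGraphOn G A) ∨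
      (¬ HasCircuit (G.induce Aᶜ) ∨ IsQuadrangleGraphOn G Aᶜ)

/-- `G+(u,v,x,y)`: subdivide the edges `uv` and `xy` (new vertices `Sum.inr 0`
resp. `Sum.inr 1`) and join the two new vertices by an edge. -/
def onePlus {V : Type} (G : SimpleGraph V) (u v x y : V) : SimpleGraph (V ⊕ Fin 2) :=
  SimpleGraph.fromRel (fun a b =>
    match a, b with
    | Sum.inl a, Sum.inl b => G.Adj a b ∧ s(a, b) ≠ s(u, v) ∧ s(a, b) ≠ s(x, y)
    | Sum.inl a, Sum.inr i => (i = 0 ∧ (a = u ∨ a = v)) ∨ (i = 1 ∧ (a = x ∨ a = y))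
    | Sum.inr _, Sum.inl _ => False
    | Sum.inr i, Sum.inr j => i ≠ j)

/-- The data of a 1-extension `G+(u,v,x,y)`: `uv`, `xy` are edges and
`u,v,x,y` are pairwise distinct. -/
def OneExtData {V : Type} (G : SimpleGraph V) (u v x y : V) : Prop :=
  G.Adj u v ∧ G.Adj x y ∧ u ≠ x ∧ u ≠ y ∧ v ≠ x ∧ v ≠ y

/-- A long 1-extension: moreover neither `u` nor `v` is adjacent to `x` or `y`. -/
def LongOneExtData {V : Type} (G : SimpleGraph V) (u v x y : V) : Prop :=
  OneExtData G u v x y ∧ ¬ G.Adj u x ∧ ¬ G.Adj u y ∧ ¬ G.Adj v x ∧ ¬ G.Adj v y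

/-- A short 1-extension: a 1-extension that is not long. -/
def ShortOneExtData {V : Type} (G : SimpleGraph V) (u v x y : V) : Prop :=
  OneExtData G u v x y ∧ (G.Adj u x ∨ G.Adj u y ∨ G.Adj v x ∨ G.Adj v y)

/-- A homeomorphic embedding of `G` into `H`. -/
structure HomeoEmb {V W : Type} (G : SimpleGraph V) (H : SimpleGraph W) where
  vmap : V → W
  vinj : Function.Injective vmap
  emap : ∀ ⦃a b : V⦄, G.Adj a b → H.Walk (vmap a) (vmap b)
  emap_path : ∀ ⦃a b : V⦄ (h : G.Adj a b), (emap h).IsPath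
  emap_symm : ∀ ⦃a b : V⦄ (h : G.Adj a b), (emap h.symm).reverse = emap h
  internal : ∀ ⦃a b : V⦄ (h : G.Adj a b) (w : W), w ∈ (emap h).support →
      w ∈ Set.range vmap → w = vmap a ∨ w = vmap b
  edge_disjoint : ∀ ⦃a b c d : V⦄ (h₁ : G.Adj a b) (h₂ : G.Adj c d),
      s(a, b) ≠ s(c, d) → ∀ e, e ∈ (emap h₁).edges → e ∉ (emap h₂).edges
  meet_ends : ∀ ⦃a b c d : V⦄ (h₁ : G.Adj a b) (h₂ : G.Adj c d),
      s(a, b) ≠ s(c, d) → ∀ w, w ∈ (emap h₁).support → w ∈ (emap h₂).support →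
      (w = vmap a ∨ w = vmap b) ∧ (w = vmap c ∨ w = vmap d)

/-- Subdividing the edge `uv` of `G`: the new vertex is `Sum.inr ()`. -/
def subdivideEdge {V : Type} (G : SimpleGraph V) (u v : V) : SimpleGraph (V ⊕ Unit) :=
  SimpleGraph.fromRel (fun a b =>
    match a, b with
    | Sum.inl a, Sum.inl b => G.Adj a b ∧ s(a, b) ≠ s(u, v)
    | Sum.inl a, Sum.inr _ => a = u ∨ a = v
    | _, _ => False)

/-- `S` is obtained from `G` by repeatedly subdividing edges. -/
inductive IsSubdivision {V : Type} (G : SimpleGraph V) : {W : Type} → SimpleGraph W → Prop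
  | refl : IsSubdivision G G
  | step {W : Type} {S : SimpleGraph W} {u v : W} (h : S.Adj u v)
      (hS : IsSubdivision G S) : IsSubdivision G (subdivideEdge S u v)

/-- `H` topologically contains `G`: some graph obtained from `G` by repeatedly
subdividing edges is isomorphic to a subgraph of `H`. -/
def TopContains {W V : Type} (H : SimpleGraph W) (G : SimpleGraph V) : Prop :=
  ∃ (U : Type) (S : SimpleGraph U), IsSubdivision G S ∧
    ∃ f : U → W, Function.Injective f ∧ ∀ a b : U, S.Adj a b → H.Adj (f a) (f b)

/-- The biladder on `2p` vertices; `(false, i)` is `uᵢ` and `(true, i)` is `vᵢ`. -/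
def biladder (p : ℕ) : SimpleGraph (Bool × ZMod p) :=
  SimpleGraph.fromRel (fun a b =>
    (a.1 = false ∧ b.1 = false ∧ b.2 = a.2 + 1) ∨
    (a.1 = true ∧ b.1 = true ∧ b.2 = a.2 + 2) ∨
    (a.1 = false ∧ b.1 = true ∧ a.2 = b.2))

/-!
If `u₁u₃` or `u₃v₁` were an edge, `u₁u₂u₃` would be a triangle or `u₁u₂u₃v₁` a quadrangle.
In a cubic graph, a vertex set `B` whose cut has fewer than `|B| + 2` edges spans at least `|B|`
edges, so it contains a circuit. Hence a cyclically 5-connected cubic graph has no triangle or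
quadrangle `B`: its cut has at most `|B| ≤ 4` edges and both sides contain circuits. In the
quad-connected case a triangle `u₁u₂u₃` leaves `u₃` only one neighbour for the quadrangle `C`,
and a quadrangle `u₁u₂u₃v₁` shares the edge `u₃v₁` with `C`; the union of the two is a set of
six vertices cut off by four edges from at least six vertices, with circuits on both sides.
Reading the circuit backwards gives the same for `u₄`.
-/

open Finset

theorem SimpleGraph.IsAcyclic.card_edgeFinset_lt {W : Type} [Fintype W] [Nonempty W]
    {H : SimpleGraph W} [Fintype H.edgeSet] (h : H.IsAcyclic) :
    #H.edgeFinset < Fintype.card W := by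
  classical
  obtain ⟨T, hHT, -, hT⟩ := connected_top.exists_isTree_le_of_le_of_isAcyclic le_top h
  have := hT.card_edgeFinset
  have := card_le_card (edgeFinset_mono hHT)
  omega

theorem hasCircuit_iff_not_isAcyclic {W : Type} {H : SimpleGraph W} :
    HasCircuit H ↔ ¬ H.IsAcyclic := by
  simp [HasCircuit, IsAcyclic]

theorem cutEdges_compl {V : Type} (G : SimpleGraph V) (A : Set V) :
    cutEdges G Aᶜ = cutEdges G A := by
  ext e
  constructor <;>
  · rintro ⟨a, b, ha, hb, hab, rfl⟩
    exact ⟨b, a, by simpa using hb, by simpa using ha, hab.symm, Sym2.eq_swap⟩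

section Quadrangle

variable {V : Type} {G : SimpleGraph V}

theorem IsQuadSet.ncard_eq {C : Set V} (hC : IsQuadSet G C) : C.ncard = 4 := by
  obtain ⟨a, b, c, d, rfl, hab, hac, had, hbc, hbd, hcd, -⟩ := hC
  exact Set.ncard_eq_four.2 ⟨a, b, c, d, hab, hac, had, hbc, hbd, hcd, rfl⟩

theorem IsQuadrangleGraphOn.isQuadSet {A : Set V} (h : IsQuadrangleGraphOn G A) :
    IsQuadSet G A := by
  obtain ⟨a, b, c, d, hA, hab, hac, had, hbc, hbd, hcd, h1, h2, h3, h4, -⟩ := h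
  exact ⟨a, b, c, d, hA, hab, hac, had, hbc, hbd, hcd, h1, h2, h3, h4⟩

theorem isQuadSet_of_adj {a b c d : V} (hab : G.Adj a b) (hbc : G.Adj b c) (hcd : G.Adj c d)
    (hda : G.Adj d a) (hac : a ≠ c) (hbd : b ≠ d) : IsQuadSet G {a, b, c, d} :=
  ⟨a, b, c, d, rfl, hab.ne, hac, hda.ne', hbc.ne, hbd, hcd.ne, hab, hbc, hcd, hda⟩

theorem IsQuadSet.exists_adj {C : Set V} (hC : IsQuadSet G C) {x : V} (hx : x ∈ C) :
    ∃ y ∈ C, ∃ z ∈ C, y ≠ z ∧ G.Adj x y ∧ G.Adj x z := by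
  obtain ⟨a, b, c, d, rfl, -, hac, -, -, hbd, -, hab, hbc, hcd, hda⟩ := hC
  simp only [Set.mem_insert_iff, Set.mem_singleton_iff] at hx
  rcases hx with rfl | rfl | rfl | rfl
  · exact ⟨b, by simp, d, by simp, hbd, hab, hda.symm⟩
  · exact ⟨a, by simp, c, by simp, hac, hab.symm, hbc⟩
  · exact ⟨b, by simp, d, by simp, hbd, hbc.symm, hcd⟩
  · exact ⟨a, by simp, c, by simp, hac, hda, hcd.symm⟩

theorem IsCubic.eq_or_eq_or_eq_of_adj (hcub : IsCubic G) {x p q r w : V} (hp : G.Adj x p)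
    (hq : G.Adj x q) (hr : G.Adj x r) (hpq : p ≠ q) (hpr : p ≠ r) (hqr : q ≠ r)
    (hw : G.Adj x w) : w = p ∨ w = q ∨ w = r := by
  have hsub : ({p, q, r} : Set V) ⊆ G.neighborSet x := by
    simp [Set.insert_subset_iff, hp, hq, hr]
  have hN := Set.eq_of_subset_of_ncard_le hsub
    (by rw [hcub x, Set.ncard_eq_three.2 ⟨p, q, r, hpq, hpr, hqr, rfl⟩])
    (Set.finite_of_ncard_ne_zero (by simp [hcub x]))
  have hw' : w ∈ ({p, q, r} : Set V) := hN ▸ hw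
  simpa using hw'

theorem IsQuadSet.mem_of_adj (hcub : IsCubic G) {C : Set V} (hC : IsQuadSet G C) {x p q : V}
    (hx : x ∈ C) (hp : G.Adj x p) (hq : G.Adj x q) (hpq : p ≠ q) (hpC : p ∉ C) : q ∈ C := by
  by_contra hqC
  obtain ⟨y, hy, z, hz, hyz, hxy, hxz⟩ := hC.exists_adj hx
  rcases hcub.eq_or_eq_or_eq_of_adj hp hq hxz hpq (ne_of_mem_of_not_mem hz hpC).symm
    (ne_of_mem_of_not_mem hz hqC).symm hxy with rfl | rfl | rfl
  · exact hpC hy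
  · exact hqC hy
  · exact hyz rfl

end Quadrangle

section Cut

variable {V : Type} [Fintype V] {G : SimpleGraph V} [DecidableRel G.Adj]

theorem IsCubic.card_neighborFinset (hcub : IsCubic G) (v : V) : #(G.neighborFinset v) = 3 := by
  rw [neighborFinset_def, ← Set.ncard_eq_toFinset_card', hcub v]

theorem IsCubic.neighborFinset_subset (hcub : IsCubic G) {B : Finset V} {x p q r : V}
    (hp : G.Adj x p) (hq : G.Adj x q) (hr : G.Adj x r) (hpq : p ≠ q) (hpr : p ≠ r)
    (hqr : q ≠ r) (hpB : p ∈ B) (hqB : q ∈ B) (hrB : r ∈ B) : G.neighborFinset x ⊆ B := by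
  intro w hw
  rcases hcub.eq_or_eq_or_eq_of_adj hp hq hr hpq hpr hqr ((G.mem_neighborFinset x w).1 hw)
    with rfl | rfl | rfl <;> assumption

theorem IsQuadSet.neighborFinset_subset (hcub : IsCubic G) {C : Set V} (hC : IsQuadSet G C)
    {B : Finset V} (hCB : C ⊆ B) {x w : V} (hx : x ∈ C) (hw : G.Adj x w) (hwC : w ∉ C)
    (hwB : w ∈ B) : G.neighborFinset x ⊆ B := by
  obtain ⟨y, hy, z, hz, hyz, hxy, hxz⟩ := hC.exists_adj hx
  exact hcub.neighborFinset_subset hw hxy hxz (ne_of_mem_of_not_mem hy hwC).symm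
    (ne_of_mem_of_not_mem hz hwC).symm hyz hwB (hCB hy) (hCB hz)

variable [DecidableEq V]

theorem IsCubic.card_neighborFinset_sdiff_le_one (hcub : IsCubic G) {B : Finset V} {x p q : V}
    (hp : G.Adj x p) (hq : G.Adj x q) (hpq : p ≠ q) (hpB : p ∈ B) (hqB : q ∈ B) :
    #(G.neighborFinset x \ B) ≤ 1 := calc
  #(G.neighborFinset x \ B) ≤ #(G.neighborFinset x \ {p, q}) :=
    card_le_card (sdiff_subset_sdiff subset_rfl (by simp [insert_subset_iff, hpB, hqB]))
  _ = 1 := by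
    rw [card_sdiff_of_subset (by simp [insert_subset_iff, hp, hq]), hcub.card_neighborFinset,
      card_pair hpq]

theorem IsQuadSet.card_neighborFinset_sdiff_le_one (hcub : IsCubic G) {C : Set V}
    (hC : IsQuadSet G C) {B : Finset V} (hCB : C ⊆ B) {x : V} (hx : x ∈ C) :
    #(G.neighborFinset x \ B) ≤ 1 := by
  obtain ⟨y, hy, z, hz, hyz, hxy, hxz⟩ := hC.exists_adj hx
  exact hcub.card_neighborFinset_sdiff_le_one hxy hxz hyz (hCB hy) (hCB hz)

theorem ncard_cutEdges_eq_sum (B : Finset V) :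
    (cutEdges G ↑B).ncard = ∑ b ∈ B, #(G.neighborFinset b \ B) := by
  have hcut : cutEdges G ↑B =
      ↑(B.biUnion fun a => (G.neighborFinset a \ B).image (s(a, ·))) := by
    ext e
    simp only [cutEdges, Set.mem_ofPred_eq, coe_biUnion, Set.mem_iUnion, mem_coe, mem_image,
      mem_sdiff, mem_neighborFinset]
    constructor
    · rintro ⟨a, b, ha, hb, hab, rfl⟩
      exact ⟨a, ha, b, ⟨hab, hb⟩, rfl⟩
    · rintro ⟨a, ha, b, ⟨hab, hb⟩, rfl⟩
      exact ⟨a, b, ha, hb, hab, rfl⟩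
  rw [hcut, Set.ncard_coe_finset, card_biUnion]
  · exact sum_congr rfl fun a _ => card_image_of_injective _ fun b b' => Sym2.congr_right.1
  · intro a ha a' ha' hne
    rw [Function.onFun, Finset.disjoint_left]
    intro e he he'
    obtain ⟨b, hb, rfl⟩ := mem_image.1 he
    obtain ⟨b', -, he⟩ := mem_image.1 he'
    rcases Sym2.eq_iff.1 he with ⟨h, -⟩ | ⟨h, -⟩
    · exact hne h.symm
    · exact (mem_sdiff.1 hb).2 (h ▸ ha')

theorem ncard_cutEdges_le {B S : Finset V} (hSB : S ⊆ B)
    (hS : ∀ b ∈ S, G.neighborFinset b ⊆ B) (hB : ∀ b ∈ B, #(G.neighborFinset b \ B) ≤ 1) :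
    (cutEdges G ↑B).ncard ≤ #B - #S := by
  rw [ncard_cutEdges_eq_sum, ← sum_sdiff hSB,
    sum_eq_zero fun b hb => card_eq_zero.2 (sdiff_eq_empty_iff_subset.2 (hS b hb)), add_zero,
    ← card_sdiff_of_subset hSB]
  simpa using sum_le_card_nsmul _ _ 1 fun b hb => hB b (mem_sdiff.1 hb).1

theorem sum_card_neighborFinset_inter_eq_two_mul (B : Finset V) :
    ∑ b ∈ B, #(G.neighborFinset b ∩ B) = 2 * #(G.induce (B : Set V)).edgeFinset := by
  rw [← sum_degrees_eq_twice_card_edges,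
    sum_subtype B (p := (· ∈ (B : Set V))) (fun _ => Iff.rfl)]
  refine Fintype.sum_congr _ _ fun b => ?_
  rw [← card_neighborFinset_eq_degree, ← card_map (.subtype (· ∈ (B : Set V)))]
  convert (congrArg card (map_neighborFinset_induce (G := G) b)).symm using 2
  · simp
  · congr!

end Cut

section Connectivity

variable {V : Type} [Fintype V] {G : SimpleGraph V}

theorem IsCubic.hasCircuit_induce (hcub : IsCubic G) {B : Finset V} (hB : B.Nonempty)
    (hcut : (cutEdges G ↑B).ncard < #B + 2) : HasCircuit (G.induce ↑B) := by
  classical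
  rw [hasCircuit_iff_not_isAcyclic]
  intro hacyc
  have : Nonempty (B : Set V) := hB.to_subtype
  have hedges := hacyc.card_edgeFinset_lt
  have hcardB : Fintype.card (B : Set V) = #B := by simp
  have hdeg := sum_card_neighborFinset_inter_eq_two_mul (G := G) B
  have hsum : (cutEdges G ↑B).ncard + ∑ b ∈ B, #(G.neighborFinset b ∩ B) = 3 * #B := by
    rw [ncard_cutEdges_eq_sum, ← sum_add_distrib,
      sum_congr rfl fun b _ => card_sdiff_add_card_inter _ _]
    simp [hcub.card_neighborFinset, mul_comm]
  omega

theorem CyclicallyKConnected.exists_one_lt_card_neighborFinset_sdiff [DecidableEq V]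
    [DecidableRel G.Adj] {k : ℕ} (h : CyclicallyKConnected G k) (hcub : IsCubic G)
    {B : Finset V} (hB : B.Nonempty) (hBk : #B < k) :
    ∃ b ∈ B, 1 < #(G.neighborFinset b \ B) := by
  by_contra! hout
  have hcut : (cutEdges G ↑B).ncard ≤ #B := by
    simpa using ncard_cutEdges_le (empty_subset B) (by simp) hout
  have hBc : #B < #Bᶜ := by
    have := h.2.1
    rw [card_compl]
    omega
  have hBc' : Bᶜ.Nonempty := card_pos.1 (by omega)
  rcases h.2.2 ↑B (by simpa) (by simpa [← coe_compl]) (by omega) with hnc | hnc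
  · exact hnc (hcub.hasCircuit_induce hB (by omega))
  · rw [← coe_compl] at hnc
    exact hnc (hcub.hasCircuit_induce hBc' (by rw [coe_compl, cutEdges_compl]; omega))

theorem CyclicallyKConnected.not_adj_of_adj_of_adj {k : ℕ} (h : CyclicallyKConnected G k)
    (hcub : IsCubic G) (hk : 3 < k) {a b c : V} (hab : G.Adj a b) (hbc : G.Adj b c) :
    ¬ G.Adj c a := by
  classical
  intro hca
  obtain ⟨x, hx, hout⟩ :=
    h.exists_one_lt_card_neighborFinset_sdiff hcub (B := {a, b, c}) (by simp)
      (card_le_three.trans_lt hk)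
  refine hout.not_ge ?_
  simp only [mem_insert, mem_singleton] at hx
  rcases hx with rfl | rfl | rfl
  · exact hcub.card_neighborFinset_sdiff_le_one hab hca.symm hbc.ne (by simp) (by simp)
  · exact hcub.card_neighborFinset_sdiff_le_one hab.symm hbc hca.ne' (by simp) (by simp)
  · exact hcub.card_neighborFinset_sdiff_le_one hca hbc.symm hab.ne (by simp) (by simp)

theorem CyclicallyKConnected.not_isQuadSet {k : ℕ} (h : CyclicallyKConnected G k)
    (hcub : IsCubic G) (hk : 4 < k) (C : Set V) : ¬ IsQuadSet G C := by
  classical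
  rintro ⟨a, b, c, d, -, -, hac, -, -, hbd, -, hab, hbc, hcd, hda⟩
  obtain ⟨x, hx, hout⟩ :=
    h.exists_one_lt_card_neighborFinset_sdiff hcub (B := {a, b, c, d}) (by simp)
      (card_le_four.trans_lt hk)
  refine hout.not_ge ?_
  simp only [mem_insert, mem_singleton] at hx
  rcases hx with rfl | rfl | rfl | rfl
  · exact hcub.card_neighborFinset_sdiff_le_one hab hda.symm hbd (by simp) (by simp)
  · exact hcub.card_neighborFinset_sdiff_le_one hab.symm hbc hac (by simp) (by simp)
  · exact hcub.card_neighborFinset_sdiff_le_one hbc.symm hcd hbd (by simp) (by simp)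
  · exact hcub.card_neighborFinset_sdiff_le_one hcd.symm hda hac.symm (by simp) (by simp)

theorem QuadConnected.five_le_ncard_cutEdges [DecidableEq V] (hq : QuadConnected G)
    (hcub : IsCubic G) {B : Finset V} (hB : 5 ≤ #B) (hBc : 5 ≤ #Bᶜ) :
    5 ≤ (cutEdges G ↑B).ncard := by
  classical
  by_contra! hcut
  have hBne : B.Nonempty := card_pos.1 (by omega)
  have hBcne : Bᶜ.Nonempty := card_pos.1 (by omega)
  rcases hq.2.2.2 ↑B (by simpa) (by simpa [← coe_compl]) (by omega) with
    (hnc | hquad) | (hnc | hquad)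
  · exact hnc (hcub.hasCircuit_induce hBne (by omega))
  · have := hquad.isQuadSet.ncard_eq
    rw [Set.ncard_coe_finset] at this
    omega
  · rw [← coe_compl] at hnc
    exact hnc (hcub.hasCircuit_induce hBcne (by rw [coe_compl, cutEdges_compl]; omega))
  · have := hquad.isQuadSet.ncard_eq
    rw [← coe_compl, Set.ncard_coe_finset] at this
    omega

theorem QuadConnected.not_adj_of_isQuadSet (hq : QuadConnected G) (hcub : IsCubic G)
    {C : Set V} (hC : IsQuadSet G C) {u₁ u₂ u₃ v : V} (hu₃ : u₃ ∈ C) (hu₁ : u₁ ∉ C)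
    (hu₂ : u₂ ∉ C) (h12 : G.Adj u₁ u₂) (h23 : G.Adj u₂ u₃) (hv : G.Adj u₁ v) (hv₂ : v ≠ u₂) :
    ¬ G.Adj u₃ v := by
  classical
  intro h3v
  have hvC : v ∈ C := hC.mem_of_adj hcub hu₃ h23.symm h3v hv₂.symm hu₂
  have hQ : IsQuadSet G {u₁, u₂, u₃, v} :=
    isQuadSet_of_adj h12 h23 h3v hv.symm (ne_of_mem_of_not_mem hu₃ hu₁).symm hv₂.symm
  have hcardV : 12 ≤ Fintype.card V := hq.2.2.1 ⟨C, _, hC, hQ, fun h => hu₁ (h ▸ by simp)⟩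
  -- no vertex of `D` has two neighbours outside `D`, and `u₃`, `v` have none: `δD` has ≤ 4 edges
  set D : Finset V := insert u₁ (insert u₂ C.toFinset) with hD
  have hCD : C ⊆ D := fun x hx => by simp [hD, hx]
  have hcardD : #D = 6 := by
    rw [card_insert_of_notMem (by simp [h12.ne, hu₁]), card_insert_of_notMem (by simpa),
      ← Set.ncard_eq_toFinset_card', hC.ncard_eq]
  have hcut : (cutEdges G ↑D).ncard ≤ #D - #{u₃, v} := by
    refine ncard_cutEdges_le
      (insert_subset_iff.2 ⟨hCD hu₃, singleton_subset_iff.2 (hCD hvC)⟩) ?_ ?_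
    · simp only [mem_insert, mem_singleton, forall_eq_or_imp, forall_eq]
      exact ⟨hC.neighborFinset_subset hcub hCD hu₃ h23.symm hu₂ (by simp [hD]),
        hC.neighborFinset_subset hcub hCD hvC hv.symm hu₁ (by simp [hD])⟩
    · simp only [hD, mem_insert, Set.mem_toFinset, forall_eq_or_imp]
      exact ⟨hcub.card_neighborFinset_sdiff_le_one h12 hv hv₂.symm (by simp) (hCD hvC),
        hcub.card_neighborFinset_sdiff_le_one h12.symm h23 (ne_of_mem_of_not_mem hu₃ hu₁).symm
          (by simp) (hCD hu₃),
        fun x hx => hC.card_neighborFinset_sdiff_le_one hcub hCD hx⟩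
  rw [card_pair h3v.ne] at hcut
  have := hq.five_le_ncard_cutEdges hcub (B := D) (by omega) (by rw [card_compl]; omega)
  omega

theorem not_adj_and_not_adj_of_adj_of_adj (hcub : IsCubic G) {u₁ u₂ u₃ v : V}
    (hside : CyclicallyKConnected G 5 ∨
      (QuadConnected G ∧ ∃ C : Set V, IsQuadSet G C ∧ u₃ ∈ C ∧ u₁ ∉ C ∧ u₂ ∉ C))
    (h12 : G.Adj u₁ u₂) (h23 : G.Adj u₂ u₃) (hv : G.Adj u₁ v) (hv₂ : v ≠ u₂) (h13 : u₁ ≠ u₃) :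
    ¬ G.Adj u₁ u₃ ∧ ¬ G.Adj u₃ v := by
  rcases hside with h5 | ⟨hq, C, hC, hu₃, hu₁, hu₂⟩
  · have hn13 : ¬ G.Adj u₁ u₃ := fun h =>
      h5.not_adj_of_adj_of_adj hcub (by norm_num) h12 h23 h.symm
    refine ⟨hn13, fun h3v => h5.not_isQuadSet hcub (by norm_num) _
      (isQuadSet_of_adj h12 h23 h3v hv.symm h13 hv₂.symm)⟩
  · exact ⟨fun h => hu₁ (hC.mem_of_adj hcub hu₃ h23.symm h.symm h12.ne' hu₂),
      hq.not_adj_of_isQuadSet hcub hC hu₃ hu₁ hu₂ h12 h23 hv hv₂⟩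

end Connectivity

/-- for a circuit u1…u5 and v1 the third neighbor of u1,
the extension G+(u3,u4,u1,v1) is a long 1-extension. -/
theorem circuit_extension_long
    {V : Type} [Fintype V] (G : SimpleGraph V) (hcub : IsCubic G)
    (u₁ u₂ u₃ u₄ u₅ : V)
    (hcirc : ([u₁, u₂, u₃, u₄, u₅] : List V).Pairwise (· ≠ ·))
    (h12 : G.Adj u₁ u₂) (h23 : G.Adj u₂ u₃) (h34 : G.Adj u₃ u₄)
    (h45 : G.Adj u₄ u₅) (h51 : G.Adj u₅ u₁)
    (hside : CyclicallyKConnected G 5 ∨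
      (QuadConnected G ∧
        ∃ C : Set V, IsQuadSet G C ∧ u₃ ∈ C ∧ u₄ ∈ C ∧ u₁ ∉ C ∧ u₂ ∉ C ∧ u₅ ∉ C))
    (v₁ : V) (hv₁ : G.Adj u₁ v₁) (hv₁2 : v₁ ≠ u₂) (hv₁5 : v₁ ≠ u₅) :
    LongOneExtData G u₃ u₄ u₁ v₁ := by
  have h13 : u₁ ≠ u₃ := List.rel_of_pairwise_cons hcirc (by simp)
  have h14 : u₁ ≠ u₄ := List.rel_of_pairwise_cons hcirc (by simp)
  -- the circuit read backwards from `u₁` puts `u₄` in the place of `u₃`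
  obtain ⟨hn13, hn3v⟩ := not_adj_and_not_adj_of_adj_of_adj hcub
    (hside.imp_right fun ⟨hq, C, hC, hu₃, _, hu₁, hu₂, _⟩ => ⟨hq, C, hC, hu₃, hu₁, hu₂⟩)
    h12 h23 hv₁ hv₁2 h13
  obtain ⟨hn14, hn4v⟩ := not_adj_and_not_adj_of_adj_of_adj hcub
    (hside.imp_right fun ⟨hq, C, hC, _, hu₄, hu₁, _, hu₅⟩ => ⟨hq, C, hC, hu₄, hu₁, hu₅⟩)
    h51.symm h45.symm hv₁ hv₁5 h14
  exact ⟨⟨h34, hv₁, h13.symm, fun h => hn13 (h ▸ hv₁), h14.symm, fun h => hn14 (h ▸ hv₁)⟩,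
    fun h => hn13 h.symm, hn3v, fun h => hn14 h.symm, hn4v⟩
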